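/- Let n ≥ 2. For j = 1, …, p let H_j = G_j + Σ_{T} a_{j,T} · Z_T, where each G_j is a Hermitian U(1)-invariant 2-local complex matrix, the sum runs over 3-element subsets T of Fin n, and the coefficients a_{j,T} are real. Set V := Matrix.exp(-i·H_1)·…·Matrix.exp(-i·H_p). Then Δ3(V) ≡ -8 · Σ_{j=1}^{p} Σ_{T} a_{j,T} (mod 2π). -/

import Mathlib

/-!
Every factor `exp(-i H_j)` is U(1)-invariant, so the weight-`m` block of `V` is the product of
the blocks `exp(-i (H_j)_m)`; as `(H_j)_m` is Hermitian, `det V_m = exp(-i ∑_j tr (H_j)_m)`.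
Hence `θ_m(V) ≡ -Re ∑_j tr (H_j)_m`, and `Δ3(V) ≡ -Re τ(∑_j H_j)` for the linear functional
`τ(M) = tr M_{n-1} - tr M_1 - (n-2)(tr M_n - tr M_0)`, which only sees the diagonal of `M` at
the strings of weight `0, 1, n-1, n`. If that diagonal depends on at most two qubits, the
one-hot and one-cold strings pair off and `τ` vanishes, so `τ` kills every 2-local term,
while `τ(Z_T) = 8` when `|T| = 3`.
-/

open Finset Matrix

noncomputable section

/-- Hamming weight of a basis label. -/
def hw {n : ℕ} (z : Fin n → Bool) : ℕ := (Finset.univ.filter fun i => z i = true).card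

/-- The sign `(-1)^{z i}` of a bit. -/
def sgn (b : Bool) : ℂ := if b = true then -1 else 1

/-- The operator `Z_T = ∏_{j ∈ T} Z_j`. -/
def Zmat (n : ℕ) (T : Finset (Fin n)) : Matrix (Fin n → Bool) (Fin n → Bool) ℂ :=
  Matrix.diagonal fun z => ∏ j ∈ T, sgn (z j)

/-- A matrix is U(1)-invariant if it vanishes off the Hamming-weight blocks. -/
def U1Invariant {n : ℕ} (M : Matrix (Fin n → Bool) (Fin n → Bool) ℂ) : Prop :=
  ∀ z z', hw z ≠ hw z' → M z z' = 0

/-- The weight-`m` block `M_m` of a matrix `M`. -/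
def block {n : ℕ} (M : Matrix (Fin n → Bool) (Fin n → Bool) ℂ) (m : ℕ) :
    Matrix {z : Fin n → Bool // hw z = m} {z : Fin n → Bool // hw z = m} ℂ :=
  fun a b => M a.1 b.1

/-- The phase `θ_m(V) = arg det(V_m)`. -/
def theta {n : ℕ} (V : Matrix (Fin n → Bool) (Fin n → Bool) ℂ) (m : ℕ) : ℝ :=
  Complex.arg (Matrix.det (block V m))

/-- The phase `Δ3(V) = θ_{n-1} - θ_1 - (n-2)(θ_n - θ_0)`. -/
def Delta3 {n : ℕ} (V : Matrix (Fin n → Bool) (Fin n → Bool) ℂ) : ℝ :=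
  theta V (n-1) - theta V 1 - ((n : ℝ) - 2) * (theta V n - theta V 0)

/-- `x ≡ y (mod 2π)`. -/
def Mod2Pi (x y : ℝ) : Prop := ∃ j : ℤ, x - y = 2 * Real.pi * j

/-- A matrix `M` is supported on `S ⊆ Fin n` if it acts only on the qubits in `S`. -/
def SupportedOn {n : ℕ} (S : Finset (Fin n)) (M : Matrix (Fin n → Bool) (Fin n → Bool) ℂ) : Prop :=
  ∃ f : ({ i // i ∈ S } → Bool) → ({ i // i ∈ S } → Bool) → ℂ,
    ∀ z z' : Fin n → Bool,
      M z z' = if ∀ i ∉ S, z i = z' i then f (fun i => z i.1) (fun i => z' i.1) else 0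

/-- A matrix is `k`-local if it is a finite sum of matrices each supported on a
subset of size at most `k`. -/
def KLocal {n : ℕ} (k : ℕ) (M : Matrix (Fin n → Bool) (Fin n → Bool) ℂ) : Prop :=
  ∃ (p : ℕ) (g : Fin p → Matrix (Fin n → Bool) (Fin n → Bool) ℂ) (S : Fin p → Finset (Fin n)),
    (∀ i, (S i).card ≤ k ∧ SupportedOn (S i) (g i)) ∧ M = ∑ i, g i

lemma Matrix.IsHermitian.det_exp_smul {ι : Type*} [Fintype ι] [DecidableEq ι]
    {B : Matrix ι ι ℂ} (hB : B.IsHermitian) (c : ℂ) :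
    (NormedSpace.exp (c • B)).det = Complex.exp (c * B.trace) := by
  set U : Matrix ι ι ℂ := (hB.eigenvectorUnitary : Matrix ι ι ℂ)
  have hU : star U * U = 1 := Unitary.star_mul_self_of_mem hB.eigenvectorUnitary.2
  have hUnit : IsUnit U := Unitary.isUnit_coe
  have hconj : c • B = U * diagonal (fun i => c * hB.eigenvalues i) * U⁻¹ := by
    conv_lhs => rw [hB.spectral_theorem, Unitary.conjStarAlgAut_apply]
    rw [Matrix.inv_eq_left_inv hU]
    change _ = U * diagonal (c • (RCLike.ofReal ∘ hB.eigenvalues)) * star U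
    rw [diagonal_smul, Matrix.mul_smul, Matrix.smul_mul]
  rw [hconj, Matrix.exp_conj _ _ hUnit, det_conj hUnit, exp_diagonal, det_diagonal,
    hB.trace_eq_sum_eigenvalues, Finset.mul_sum, Complex.exp_sum]
  simp [← Complex.exp_eq_exp_ℂ]

lemma mod2Pi_arg_exp (z : ℂ) : Mod2Pi (Complex.arg (Complex.exp z)) z.im :=
  ⟨-toIocDiv Real.two_pi_pos (-Real.pi) z.im, by
    rw [Complex.arg_exp, toIocMod]
    push_cast
    ring⟩

abbrev QubitMatrix (n : ℕ) := Matrix (Fin n → Bool) (Fin n → Bool) ℂ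

section

variable {n : ℕ}

def oneHot (i : Fin n) : Fin n → Bool := fun j => decide (j = i)

def oneCold (i : Fin n) : Fin n → Bool := fun j => !decide (j = i)

lemma oneHot_injective : Function.Injective (oneHot (n := n)) :=
  fun i _ h => by simpa [oneHot] using congrFun h i

lemma oneCold_injective : Function.Injective (oneCold (n := n)) :=
  fun i _ h => by simpa [oneCold] using congrFun h i

lemma hw_not (z : Fin n → Bool) : hw (fun j => !z j) = n - hw z := by
  have := card_filter_add_card_filter_not (s := univ) (fun j => z j = true)
  simp only [card_univ, Fintype.card_fin, Bool.not_eq_true] at this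
  simp only [hw, Bool.not_eq_eq_eq_not, Bool.not_true]
  omega

lemma hw_le (z : Fin n → Bool) : hw z ≤ n :=
  (card_le_univ _).trans_eq (Fintype.card_fin n)

lemma hw_eq_zero_iff {z : Fin n → Bool} : hw z = 0 ↔ z = fun _ => false := by
  simp [hw, funext_iff]

lemma hw_eq_card_iff {z : Fin n → Bool} : hw z = n ↔ z = fun _ => true := by
  have : hw z = n ↔ hw z = Fintype.card (Fin n) := by rw [Fintype.card_fin]
  rw [this, hw, card_eq_iff_eq_univ]
  simp [Finset.eq_univ_iff_forall, funext_iff]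

lemma hw_eq_one_iff {z : Fin n → Bool} : hw z = 1 ↔ ∃ i, oneHot i = z := by
  simp only [hw, card_eq_one, Finset.ext_iff, funext_iff, oneHot, mem_filter, mem_univ, true_and,
    mem_singleton]
  refine exists_congr fun i => forall_congr' fun j => ?_
  cases z j <;> simp [eq_comm]

lemma hw_eq_sub_one_iff (hn : 1 ≤ n) {z : Fin n → Bool} :
    hw z = n - 1 ↔ ∃ i, oneCold i = z := by
  have hnot : hw z = n - 1 ↔ hw (fun j => !z j) = 1 := by
    have := hw_le z
    rw [hw_not]
    omega
  rw [hnot, hw_eq_one_iff]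
  refine exists_congr fun i => ?_
  simp only [oneHot, oneCold, funext_iff]
  exact forall_congr' fun j => by cases z j <;> simp

section Blocks

variable {M N : QubitMatrix n}

lemma u1Invariant_iff_blockTriangular :
    U1Invariant M ↔ M.BlockTriangular hw ∧ M.BlockTriangular (OrderDual.toDual ∘ hw) := by
  refine ⟨fun h => ⟨fun z z' hlt => h z z' hlt.ne',
    fun z z' hlt => h z z' (OrderDual.toDual_lt_toDual.1 hlt).ne⟩, fun ⟨h, h'⟩ z z' hne => ?_⟩
  rcases Nat.lt_or_gt_of_ne hne with hlt | hlt
  · exact h' hlt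
  · exact h hlt

lemma U1Invariant.exp (hM : U1Invariant M) : U1Invariant (NormedSpace.exp M) := by
  rw [u1Invariant_iff_blockTriangular] at *
  exact ⟨hM.1.exp, hM.2.exp⟩

lemma U1Invariant.smul (hM : U1Invariant M) (c : ℂ) : U1Invariant (c • M) :=
  fun z z' h => by simp [hM z z' h]

lemma block_eq_toBlock (M : QubitMatrix n) (m : ℕ) :
    block M m = M.toBlock (fun z => hw z = m) (fun z => hw z = m) := rfl

lemma block_mul (hM : U1Invariant M) (N : QubitMatrix n) (m : ℕ) :
    block (M * N) m = block M m * block N m := by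
  have hoff : M.toBlock (fun z => hw z = m) (fun z => ¬hw z = m) = 0 := by
    ext z z'
    exact hM _ _ (z.2.trans_ne (Ne.symm z'.2))
  rw [block_eq_toBlock, toBlock_mul_eq_add _ (fun z => hw z = m), hoff, Matrix.zero_mul, add_zero]
  rfl

lemma block_list_prod (L : List (QubitMatrix n)) (hL : ∀ A ∈ L, U1Invariant A) (m : ℕ) :
    block L.prod m = (L.map (block · m)).prod := by
  induction L with
  | nil => ext a b; simp [block, one_apply, Subtype.ext_iff]
  | cons A L ih =>
    rw [List.prod_cons, block_mul (hL A List.mem_cons_self), List.map_cons, List.prod_cons,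
      ih fun B hB => hL B (List.mem_cons_of_mem A hB)]

lemma HasSum.block {ι : Type*} {f : ι → QubitMatrix n} (hf : HasSum f M) (m : ℕ) :
    HasSum (fun i => block (f i) m) (block M m) :=
  Pi.hasSum.2 fun a => Pi.hasSum.2 fun b => Pi.hasSum.1 (Pi.hasSum.1 hf a.1) b.1

lemma block_pow (hM : U1Invariant M) (m k : ℕ) : block (M ^ k) m = block M m ^ k := by
  induction k with
  | zero => ext a b; simp [block, one_apply, Subtype.ext_iff]
  | succ k ih => rw [pow_succ', block_mul hM, ih, pow_succ']

lemma block_exp (hM : U1Invariant M) (m : ℕ) :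
    block (NormedSpace.exp M) m = NormedSpace.exp (block M m) := by
  -- a norm is needed only for the summability of the exponential series
  let _ : NormedRing (QubitMatrix n) := Matrix.linftyOpNormedRing
  let _ : NormedAlgebra ℂ (QubitMatrix n) := Matrix.linftyOpNormedAlgebra
  have hsum := ((NormedSpace.expSeries_summable' (𝕂 := ℂ) M).hasSum).block m
  rw [NormedSpace.exp_eq_tsum ℂ, NormedSpace.exp_eq_tsum ℂ]
  refine hsum.tsum_eq.symm.trans (tsum_congr fun k => ?_)
  rw [← block_pow hM]
  rfl

end Blocks

def blockTrace (m : ℕ) : QubitMatrix n →ₗ[ℂ] ℂ where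
  toFun M := (block M m).trace
  map_add' M N := trace_add (block M m) (block N m)
  map_smul' c M := trace_smul c (block M m)

def delta3Trace : QubitMatrix n →ₗ[ℂ] ℂ :=
  blockTrace (n - 1) - blockTrace 1 - ((n : ℂ) - 2) • (blockTrace n - blockTrace 0)

lemma blockTrace_eq_sum {ι : Type*} [Fintype ι] {e : ι → Fin n → Bool}
    (he : Function.Injective e) {m : ℕ} (h : ∀ z, hw z = m ↔ ∃ i, e i = z) (M : QubitMatrix n) :
    blockTrace m M = ∑ i, M (e i) (e i) := by
  let E : ι ≃ {z // hw z = m} :=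
    Equiv.ofBijective (fun i => ⟨e i, (h _).2 ⟨i, rfl⟩⟩)
      ⟨fun i i' hii' => he (congrArg Subtype.val hii'), fun z => by
        obtain ⟨i, hi⟩ := (h z).1 z.2
        exact ⟨i, Subtype.ext hi⟩⟩
  exact (Fintype.sum_equiv E _ _ fun _ => rfl).symm

lemma blockTrace_of_hw_iff_eq {m : ℕ} {z₀ : Fin n → Bool} (h : ∀ z, hw z = m ↔ z = z₀)
    (M : QubitMatrix n) : blockTrace m M = M z₀ z₀ := by
  simpa using blockTrace_eq_sum (Function.injective_of_subsingleton fun _ : Unit => z₀)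
    (fun z => (h z).trans ⟨fun hz => ⟨(), hz.symm⟩, fun ⟨_, hz⟩ => hz.symm⟩) M

lemma delta3Trace_apply (hn : 1 ≤ n) (M : QubitMatrix n) :
    delta3Trace M = ∑ i, M (oneCold i) (oneCold i) - ∑ i, M (oneHot i) (oneHot i) -
      ((n : ℂ) - 2) *
        (M (fun _ => true) (fun _ => true) - M (fun _ => false) (fun _ => false)) := by
  simp only [delta3Trace, LinearMap.sub_apply, LinearMap.smul_apply, smul_eq_mul,
    blockTrace_eq_sum oneCold_injective (fun _ => hw_eq_sub_one_iff hn),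
    blockTrace_eq_sum oneHot_injective (fun _ => hw_eq_one_iff),
    blockTrace_of_hw_iff_eq (fun _ => hw_eq_card_iff),
    blockTrace_of_hw_iff_eq (fun _ => hw_eq_zero_iff)]

lemma delta3Trace_eq_of_dependsOn (hn : 1 ≤ n) {M : QubitMatrix n} {S : Finset (Fin n)}
    (hM : DependsOn (fun z => M z z) S) :
    delta3Trace M = ∑ i ∈ S, (M (oneCold i) (oneCold i) - M (oneHot i) (oneHot i)) +
      (2 - S.card) *
        (M (fun _ => true) (fun _ => true) - M (fun _ => false) (fun _ => false)) := by
  have hcold : ∀ i ∈ Sᶜ, M (oneCold i) (oneCold i) = M (fun _ => true) (fun _ => true) :=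
    fun i hi => hM fun j hj => by simp [oneCold, ne_of_mem_of_not_mem hj (mem_compl.1 hi)]
  have hhot : ∀ i ∈ Sᶜ, M (oneHot i) (oneHot i) = M (fun _ => false) (fun _ => false) :=
    fun i hi => hM fun j hj => by simp [oneHot, ne_of_mem_of_not_mem hj (mem_compl.1 hi)]
  have hcard : ((Sᶜ).card : ℂ) = n - S.card := by
    rw [card_compl, Fintype.card_fin, Nat.cast_sub ((card_le_univ S).trans_eq (Fintype.card_fin n))]
  rw [delta3Trace_apply hn, ← sum_add_sum_compl S, ← sum_add_sum_compl S (fun i => M (oneHot i) _),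
    sum_congr rfl hcold, sum_congr rfl hhot, sum_const, sum_const, nsmul_eq_mul, nsmul_eq_mul,
    hcard, sum_sub_distrib]
  ring

lemma SupportedOn.dependsOn_diag {S : Finset (Fin n)} {M : QubitMatrix n} (hM : SupportedOn S M) :
    DependsOn (fun z => M z z) S := by
  obtain ⟨f, hf⟩ := hM
  intro z z' h
  have hS : (fun i : S => z i.1) = fun i => z' i.1 := funext fun i => h i.1 (mem_coe.2 i.2)
  simp only [hf, implies_true, if_true, hS]

lemma delta3Trace_eq_zero_of_supportedOn (hn : 1 ≤ n) {S : Finset (Fin n)} (hS : S.card ≤ 2)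
    {M : QubitMatrix n} (hM : SupportedOn S M) : delta3Trace M = 0 := by
  have hd := hM.dependsOn_diag
  rw [delta3Trace_eq_of_dependsOn hn hd]
  interval_cases h : S.card
  · obtain rfl := card_eq_zero.1 h
    have : M (fun _ => true) (fun _ => true) = M (fun _ => false) (fun _ => false) :=
      hd fun _ hi => absurd hi (by simp)
    simp [this]
  · obtain ⟨x, rfl⟩ := card_eq_one.1 h
    have hcold : M (oneCold x) (oneCold x) = M (fun _ => false) (fun _ => false) :=
      hd fun j hj => by simp_all [oneCold]
    have hhot : M (oneHot x) (oneHot x) = M (fun _ => true) (fun _ => true) :=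
      hd fun j hj => by simp_all [oneHot]
    rw [sum_singleton, hcold, hhot]
    ring
  · obtain ⟨x, y, hxy, rfl⟩ := card_eq_two.1 h
    have hx : M (oneCold x) (oneCold x) = M (oneHot y) (oneHot y) :=
      hd fun j hj => by
        rcases (by simpa using hj : j = x ∨ j = y) with rfl | rfl <;>
          simp [oneCold, oneHot, hxy, Ne.symm hxy]
    have hy : M (oneCold y) (oneCold y) = M (oneHot x) (oneHot x) :=
      hd fun j hj => by
        rcases (by simpa using hj : j = x ∨ j = y) with rfl | rfl <;>
          simp [oneCold, oneHot, hxy, Ne.symm hxy]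
    rw [sum_pair hxy, hx, hy]
    ring

lemma delta3Trace_eq_zero_of_kLocal (hn : 1 ≤ n) {M : QubitMatrix n} (hM : KLocal 2 M) :
    delta3Trace M = 0 := by
  obtain ⟨p, g, S, hg, rfl⟩ := hM
  rw [map_sum]
  exact sum_eq_zero fun i _ => delta3Trace_eq_zero_of_supportedOn hn (hg i).1 (hg i).2

lemma delta3Trace_Zmat {T : Finset (Fin n)} (hT : T.card = 3) : delta3Trace (Zmat n T) = 8 := by
  have hn : 1 ≤ n := by
    have := card_le_univ T
    simp only [Fintype.card_fin] at this
    omega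
  have hd : DependsOn (fun z => Zmat n T z z) T := fun z z' h => by
    simp only [Zmat, diagonal_apply_eq]
    exact prod_congr rfl fun j hj => by rw [h j hj]
  rw [delta3Trace_eq_of_dependsOn hn hd, hT]
  obtain ⟨x, y, z, hxy, hxz, hyz, rfl⟩ := card_eq_three.1 hT
  simp [Zmat, sgn, oneHot, oneCold, sum_insert, prod_insert, hxy, hxz, hyz, Ne.symm hxy,
    Ne.symm hxz, Ne.symm hyz]
  norm_num

lemma Zmat_isHermitian (T : Finset (Fin n)) : (Zmat n T).IsHermitian :=
  isHermitian_diagonal_of_self_adjoint _ <| funext fun z => by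
    simp only [Pi.star_apply, star_prod]
    exact prod_congr rfl fun j _ => by cases z j <;> simp [sgn]

section Phases

variable {p : ℕ} {H : Fin p → QubitMatrix n}

lemma det_block_prod_exp (hU1 : ∀ j, U1Invariant (H j)) (hherm : ∀ j, (H j).IsHermitian)
    (m : ℕ) :
    (block (List.ofFn fun j => NormedSpace.exp ((-Complex.I) • H j)).prod m).det
      = Complex.exp (-Complex.I * blockTrace m (∑ j, H j)) := by
  have hfactors : ∀ A ∈ List.ofFn fun j => NormedSpace.exp ((-Complex.I) • H j), U1Invariant A := by
    simp only [List.mem_ofFn, forall_exists_index, forall_apply_eq_imp_iff]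
    exact fun j => ((hU1 j).smul _).exp
  have hdet : ∀ j, (block (NormedSpace.exp ((-Complex.I) • H j)) m).det
      = Complex.exp (-Complex.I * blockTrace m (H j)) := fun j => by
    rw [block_exp ((hU1 j).smul _)]
    exact ((hherm j).submatrix Subtype.val).det_exp_smul _
  rw [block_list_prod _ hfactors, ← coe_detMonoidHom, MonoidHom.map_list_prod, List.map_ofFn,
    List.map_ofFn, List.prod_ofFn]
  simp only [Function.comp_apply, coe_detMonoidHom, hdet, ← Complex.exp_sum, ← mul_sum, map_sum]

lemma theta_prod_exp (hU1 : ∀ j, U1Invariant (H j)) (hherm : ∀ j, (H j).IsHermitian) (m : ℕ) :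
    Mod2Pi (theta (List.ofFn fun j => NormedSpace.exp ((-Complex.I) • H j)).prod m)
      (-(blockTrace m (∑ j, H j)).re) := by
  rw [theta, det_block_prod_exp hU1 hherm]
  simpa using mod2Pi_arg_exp (-Complex.I * blockTrace m (∑ j, H j))

end Phases

lemma mod2Pi_delta3 {V M : QubitMatrix n} (h : ∀ m, Mod2Pi (theta V m) (-(blockTrace m M).re)) :
    Mod2Pi (Delta3 V) (-(delta3Trace M).re) := by
  obtain ⟨k₀, h₀⟩ := h 0
  obtain ⟨k₁, h₁⟩ := h 1
  obtain ⟨k₂, h₂⟩ := h (n - 1)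
  obtain ⟨k₃, h₃⟩ := h n
  refine ⟨k₂ - k₁ - (n - 2) * (k₃ - k₀), ?_⟩
  have hn : (n : ℂ) - 2 = ((n - 2 : ℝ) : ℂ) := by push_cast; ring
  simp only [Delta3, delta3Trace, LinearMap.sub_apply, LinearMap.smul_apply, smul_eq_mul, hn,
    Complex.sub_re, Complex.re_ofReal_mul]
  push_cast
  linear_combination h₂ - h₁ - ((n : ℝ) - 2) * (h₃ - h₀)

end

/-- for `V` generated by Hamiltonians `H_j = G_j + ∑_T a_{j,T} Z_T`
with `G_j` Hermitian U(1)-invariant 2-local and `T` ranging over 3-element subsets,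
`Δ3(V) ≡ -8 ∑_j ∑_T a_{j,T} (mod 2π)`. -/
theorem stmt19 (n : ℕ) (hn : 2 ≤ n) (p : ℕ)
    (G : Fin p → Matrix (Fin n → Bool) (Fin n → Bool) ℂ)
    (a : Fin p → Finset (Fin n) → ℝ)
    (hherm : ∀ j, (G j).IsHermitian) (hU1 : ∀ j, U1Invariant (G j))
    (h2loc : ∀ j, KLocal 2 (G j))
    (H : Fin p → Matrix (Fin n → Bool) (Fin n → Bool) ℂ)
    (hH : ∀ j, H j = G j + ∑ T ∈ Finset.powersetCard 3 (Finset.univ : Finset (Fin n)),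
        (a j T : ℂ) • Zmat n T)
    (V : Matrix (Fin n → Bool) (Fin n → Bool) ℂ)
    (hV : V = (List.ofFn fun j => NormedSpace.exp ((-Complex.I) • H j)).prod) :
    Mod2Pi (Delta3 V)
      (-8 * ∑ j, ∑ T ∈ Finset.powersetCard 3 (Finset.univ : Finset (Fin n)), a j T) := by
  have hU1H : ∀ j, U1Invariant (H j) := fun j z z' h => by
    simp [hH, hU1 j z z' h, Zmat, Matrix.sum_apply, diagonal_apply_ne _ (ne_of_apply_ne hw h)]
  have hhermH : ∀ j, (H j).IsHermitian := fun j => by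
    rw [hH j]
    exact (hherm j).add <| isSelfAdjoint_sum _ fun T _ =>
      (Zmat_isHermitian T).smul (Complex.conj_ofReal _)
  have htrace : delta3Trace (∑ j, H j)
      = ((8 * ∑ j, ∑ T ∈ powersetCard 3 univ, a j T : ℝ) : ℂ) := by
    simp only [map_sum, hH, map_add, delta3Trace_eq_zero_of_kLocal (by omega) (h2loc _), map_smul]
    push_cast
    simp only [zero_add, mul_sum]
    refine sum_congr rfl fun j _ => sum_congr rfl fun T hT => ?_
    rw [delta3Trace_Zmat (mem_powersetCard.1 hT).2, smul_eq_mul, mul_comm]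
  have hΔ := mod2Pi_delta3 fun m => hV ▸ theta_prod_exp hU1H hhermH m
  rwa [htrace, Complex.ofReal_re, ← neg_mul] at hΔ
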